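/- arXiv:2009.08654 — 3 statements merged into one kernel-verified Lean document; each statement's English description precedes it below -/
import Mathlib

section
/- If f : ℝ → ℝ is semi-decreasing with constant L, then the Hausdorff dimension of the graph of f equals 1. -/
open scoped ENNReal NNReal
open Set Function

/-- If `f : ℝ → ℝ` is semi-decreasing with constant `L`, then the Hausdorff dimension
of the graph of `f` equals `1`. -/
theorem dimH_graph_semiDecreasing (f : ℝ → ℝ) (L : ℝ) (hL : 0 < L)
    (hf : ∀ s t : ℝ, s ≤ t → f t - f s ≤ L * (t - s)) :
    dimH {p : ℝ × ℝ | p.2 = f p.1} = 1 := by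
  set G : Set (ℝ × ℝ) := {p : ℝ × ℝ | p.2 = f p.1} with hG
  set g : ℝ → ℝ := fun x => (1 + L) * x - f x with hg
  -- g expands distances
  have hkey : ∀ s t : ℝ, s ≤ t → t - s ≤ g t - g s := by
    intro s t hst
    have h := hf s t hst
    simp only [hg]
    nlinarith
  have hginj : Injective g := by
    intro a b hab
    rcases le_total a b with h | h
    · have := hkey a b h; nlinarith [hab ▸ le_refl (g a)]
    · have := hkey b a h; nlinarith
  set M : ℝ := max 1 L with hM
  have hM1 : (1 : ℝ) ≤ M := le_max_left _ _
  have hML : L ≤ M := le_max_right _ _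
  have hM0 : (0 : ℝ) ≤ M := le_trans zero_le_one hM1
  -- distance bounds along the graph
  have hbound : ∀ x y : ℝ, |x - y| ≤ M * |g x - g y| ∧ |f x - f y| ≤ M * |g x - g y| := by
    have main : ∀ x y : ℝ, x ≤ y →
        |x - y| ≤ M * |g x - g y| ∧ |f x - f y| ≤ M * |g x - g y| := by
      intro x y hxy
      have h1 : y - x ≤ g y - g x := hkey x y hxy
      have h2 : 0 ≤ g y - g x := le_trans (by linarith) h1
      have habs : |g x - g y| = g y - g x := by
        rw [abs_sub_comm, abs_of_nonneg h2]
      have hfe : f y - f x ≤ L * (y - x) := hf x y hxy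
      constructor
      · rw [abs_sub_comm, abs_of_nonneg (by linarith : (0:ℝ) ≤ y - x), habs]
        nlinarith
      · rw [habs, abs_sub_le_iff]
        constructor
        · have : f x - f y ≤ g y - g x := by simp only [hg]; nlinarith
          nlinarith
        · have : f y - f x ≤ L * (g y - g x) := by nlinarith
          nlinarith
    intro x y
    rcases le_total x y with h | h
    · exact main x y h
    · obtain ⟨h1, h2⟩ := main y x h
      rw [abs_sub_comm x y, abs_sub_comm (f x) (f y), abs_sub_comm (g x) (g y)]
      exact ⟨h1, h2⟩
  -- the parametrization
  set σ : ℝ → ℝ × ℝ := fun u => (invFun g u, f (invFun g u)) with hσ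
  have hleft : ∀ x : ℝ, invFun g (g x) = x := fun x => hginj (invFun_eq ⟨x, rfl⟩)
  have himg : G = σ '' (range g) := by
    ext p
    constructor
    · intro hp
      exact ⟨g p.1, ⟨p.1, rfl⟩, by
        simp only [hσ, hleft]
        exact Prod.ext rfl hp.symm⟩
    · rintro ⟨u, ⟨x, rfl⟩, rfl⟩
      simp only [hσ, hleft, hG]
      exact rfl
  have hMnn : (0 : ℝ) ≤ M := hM0
  set K : ℝ≥0 := ⟨M, hM0⟩ with hK
  have hlip : LipschitzOnWith K σ (range g) := by
    apply LipschitzOnWith.of_dist_le_mul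
    rintro u ⟨x, rfl⟩ v ⟨y, rfl⟩
    simp only [hσ, hleft]
    rw [Prod.dist_eq]
    obtain ⟨h1, h2⟩ := hbound x y
    simp only [Real.dist_eq]
    exact max_le h1 h2
  -- upper bound
  have hupper : dimH G ≤ 1 := by
    rw [himg]
    calc dimH (σ '' range g) ≤ dimH (range g) := hlip.dimH_image_le
      _ ≤ dimH (univ : Set ℝ) := dimH_mono (subset_univ _)
      _ = 1 := Real.dimH_univ
  -- lower bound via projection
  have hfst : Prod.fst '' G = (univ : Set ℝ) := by
    ext x
    simp only [mem_univ, iff_true]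
    exact ⟨(x, f x), rfl, rfl⟩
  have hlower : (1 : ℝ≥0∞) ≤ dimH G := by
    calc (1 : ℝ≥0∞) = dimH (univ : Set ℝ) := Real.dimH_univ.symm
      _ = dimH (Prod.fst '' G) := by rw [hfst]
      _ ≤ dimH G := LipschitzWith.dimH_image_le LipschitzWith.prod_fst G
  exact le_antisymm hupper hlower
end

section
/- For every monotone function f : ℝ → ℝ, the Hausdorff dimension of the graph of f equals 1. -/
open Set Function
open scoped ENNReal

lemma dimH_graph_of_monotone (f : ℝ → ℝ) (hf : Monotone f) :
    dimH {p : ℝ × ℝ | p.2 = f p.1} = 1 := by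
  set g : ℝ → ℝ := fun x => x + f x with hg
  have hgsm : StrictMono g := fun a b hab => add_lt_add_of_lt_of_le hab (hf hab.le)
  set φ : ℝ → ℝ × ℝ := fun t => (invFun g t, f (invFun g t)) with hφ
  have hinv : ∀ x, invFun g (g x) = x := fun x =>
    leftInverse_invFun hgsm.injective x
  have hcomp : φ ∘ g = fun x => (x, f x) := funext fun x => by simp [φ, hinv]
  have himg : φ '' (range g) = {p : ℝ × ℝ | p.2 = f p.1} := by
    rw [← range_comp, hcomp]
    ext ⟨x, y⟩
    simp only [mem_range, Prod.mk.injEq, mem_setOf_eq]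
    constructor
    · rintro ⟨a, rfl, rfl⟩
      rfl
    · intro h
      exact ⟨x, rfl, h.symm⟩
  have hlip : LipschitzOnWith 1 φ (range g) := by
    apply LipschitzOnWith.of_dist_le_mul
    rintro _ ⟨a, rfl⟩ _ ⟨b, rfl⟩
    simp only [φ, hinv, NNReal.coe_one, one_mul]
    rcases le_total a b with hab | hab
    · have h1 : f a ≤ f b := hf hab
      rw [Prod.dist_eq, Real.dist_eq, Real.dist_eq, Real.dist_eq,
        abs_of_nonpos (by linarith), abs_of_nonpos (by linarith),
        abs_of_nonpos (by simp only [g]; linarith : g a - g b ≤ 0)]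
      apply max_le <;> simp only [g] <;> linarith
    · have h1 : f b ≤ f a := hf hab
      rw [Prod.dist_eq, Real.dist_eq, Real.dist_eq, Real.dist_eq,
        abs_of_nonneg (by linarith), abs_of_nonneg (by linarith),
        abs_of_nonneg (by simp only [g]; linarith : 0 ≤ g a - g b)]
      apply max_le <;> simp only [g] <;> linarith
  have hub : dimH {p : ℝ × ℝ | p.2 = f p.1} ≤ 1 := by
    calc dimH {p : ℝ × ℝ | p.2 = f p.1} = dimH (φ '' (range g)) := by rw [himg]
    _ ≤ dimH (range g) := hlip.dimH_image_le
    _ ≤ dimH (univ : Set ℝ) := dimH_mono (subset_univ _)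
    _ = 1 := Real.dimH_univ
  have hlb : (1 : ℝ≥0∞) ≤ dimH {p : ℝ × ℝ | p.2 = f p.1} := by
    have hfst : (Prod.fst '' {p : ℝ × ℝ | p.2 = f p.1}) = univ := by
      ext x
      simp only [mem_univ, iff_true]
      exact ⟨(x, f x), rfl, rfl⟩
    calc (1 : ℝ≥0∞) = dimH (univ : Set ℝ) := Real.dimH_univ.symm
    _ = dimH (Prod.fst '' {p : ℝ × ℝ | p.2 = f p.1}) := by rw [hfst]
    _ ≤ dimH {p : ℝ × ℝ | p.2 = f p.1} :=
        LipschitzWith.dimH_image_le LipschitzWith.prod_fst _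
  exact le_antisymm hub hlb

/-- For every monotone (nondecreasing or nonincreasing) function `f : ℝ → ℝ`,
the Hausdorff dimension of its graph equals `1`. -/
theorem dimH_graph_monotone (f : ℝ → ℝ) (hf : Monotone f ∨ Antitone f) :
    dimH {p : ℝ × ℝ | p.2 = f p.1} = 1 := by
  rcases hf with hf | hf
  · exact dimH_graph_of_monotone f hf
  · have hmono : Monotone (fun x => -f x) := fun a b hab => neg_le_neg (hf hab)
    have h1 := dimH_graph_of_monotone _ hmono
    set m : ℝ × ℝ → ℝ × ℝ := fun p => (p.1, -p.2) with hm
    have hiso : Isometry m := fun p q => by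
      simp [m, Prod.edist_eq, edist_neg_neg]
    have h2 : m '' {p : ℝ × ℝ | p.2 = (fun x => -f x) p.1} = {p : ℝ × ℝ | p.2 = f p.1} := by
      ext ⟨x, y⟩
      constructor
      · rintro ⟨⟨a, b⟩, hab, heq⟩
        simp only [mem_setOf_eq] at hab
        simp only [m, Prod.mk.injEq] at heq
        obtain ⟨rfl, rfl⟩ := heq
        simp [hab]
      · intro h
        simp only [mem_setOf_eq] at h
        exact ⟨(x, -y), by simp [h], by simp [m]⟩
    have h3 : m '' {p : ℝ × ℝ | p.2 = f p.1} = {p : ℝ × ℝ | p.2 = (fun x => -f x) p.1} := by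
      ext ⟨x, y⟩
      constructor
      · rintro ⟨⟨a, b⟩, hab, heq⟩
        simp only [mem_setOf_eq] at hab
        simp only [m, Prod.mk.injEq] at heq
        obtain ⟨rfl, rfl⟩ := heq
        simp [hab]
      · intro h
        simp only [mem_setOf_eq] at h
        exact ⟨(x, -y), by simp [h], by simp [m]⟩
    apply le_antisymm
    · calc dimH {p : ℝ × ℝ | p.2 = f p.1}
          = dimH (m '' {p : ℝ × ℝ | p.2 = (fun x => -f x) p.1}) := by rw [h2]
      _ ≤ dimH {p : ℝ × ℝ | p.2 = (fun x => -f x) p.1} := hiso.lipschitz.dimH_image_le _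
      _ = 1 := h1
    · calc (1 : ℝ≥0∞) = dimH {p : ℝ × ℝ | p.2 = (fun x => -f x) p.1} := h1.symm
      _ = dimH (m '' {p : ℝ × ℝ | p.2 = f p.1}) := by rw [h3]
      _ ≤ dimH {p : ℝ × ℝ | p.2 = f p.1} := hiso.lipschitz.dimH_image_le _
end

section
/- The set K = A × A ⊆ ℝ², where A = {0} ∪ {S_n⁻¹ : n ≥ 1} and S_n is the n-th harmonic number, is a compact countable set with box-counting dimension equal to 2. -/
open Real Filter Topology

/-- The `n`-th harmonic number. -/
noncomputable def harm (n : ℕ) : ℝ := ∑ k ∈ Finset.Icc 1 n, (1 : ℝ) / k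

/-- `A = {0} ∪ {S_n⁻¹ : n ≥ 1}`. -/
noncomputable def harmSet : Set ℝ := {0} ∪ {x : ℝ | ∃ n : ℕ, 1 ≤ n ∧ x = (harm n)⁻¹}

/-- `covNum X δ` is the minimal number of closed balls of radius `δ/2` (boxes of side
`δ`) needed to cover `X`. -/
noncomputable def covNum {α : Type*} [PseudoMetricSpace α] (X : Set α) (δ : ℝ) : ℕ :=
  sInf {n : ℕ | ∃ F : Finset α, F.card = n ∧ X ⊆ ⋃ x ∈ F, Metric.closedBall x (δ / 2)}

lemma harm_eq_harmonic (n : ℕ) : harm n = (harmonic n : ℝ) := by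
  rw [harm, harmonic_eq_sum_Icc]
  push_cast
  simp [one_div]

lemma harm_succ (n : ℕ) : harm (n + 1) = harm n + 1 / (n + 1) := by
  rw [harm, harm, Finset.sum_Icc_succ_top (by omega)]
  push_cast; ring

lemma harm_strictMono : StrictMono harm := by
  apply strictMono_nat_of_lt_succ
  intro n
  rw [harm_succ]
  have : (0:ℝ) < 1 / (n+1) := by positivity
  linarith

lemma harm_one : harm 1 = 1 := by simp [harm]

lemma one_le_harm {n : ℕ} (h : 1 ≤ n) : 1 ≤ harm n := by
  rw [← harm_one]; exact harm_strictMono.monotone h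

lemma harm_pos {n : ℕ} (h : 1 ≤ n) : 0 < harm n := lt_of_lt_of_le one_pos (one_le_harm h)

lemma harm_le (n : ℕ) : harm n ≤ 1 + log n := by
  rw [harm_eq_harmonic]; exact_mod_cast harmonic_le_one_add_log n

lemma tendsto_harm : Tendsto harm atTop atTop := by
  have h := Real.tendsto_sum_range_one_div_nat_succ_atTop
  apply h.congr
  intro n
  rw [harm_eq_harmonic, harmonic]
  push_cast
  simp [one_div]

lemma harmSet_eq : harmSet = insert 0 (Set.range fun n : ℕ => (harm (n + 1))⁻¹) := by
  ext x
  simp only [harmSet, Set.mem_union, Set.mem_singleton_iff, Set.mem_setOf_eq, Set.mem_insert_iff,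
    Set.mem_range]
  apply or_congr_right
  constructor
  · rintro ⟨n, hn, rfl⟩
    exact ⟨n - 1, by rw [Nat.sub_add_cancel hn]⟩
  · rintro ⟨n, rfl⟩
    exact ⟨n + 1, by omega, rfl⟩

lemma isCompact_harmSet : IsCompact harmSet := by
  rw [harmSet_eq]
  have : Tendsto (fun n : ℕ => (harm (n + 1))⁻¹) atTop (𝓝 0) := by
    apply Tendsto.inv_tendsto_atTop
    exact tendsto_harm.comp (tendsto_add_atTop_nat 1)
  exact this.isCompact_insert_range

lemma countable_harmSet : harmSet.Countable := by
  rw [harmSet_eq]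
  exact (Set.countable_range _).insert 0

lemma harmSet_subset : harmSet ⊆ Set.Icc 0 1 := by
  rw [harmSet_eq]
  rintro x (rfl | ⟨n, rfl⟩)
  · exact ⟨le_refl 0, zero_le_one⟩
  · have h1 : 1 ≤ harm (n + 1) := one_le_harm (by omega)
    exact ⟨le_of_lt (inv_pos.2 (harm_pos (by omega))), inv_le_one_of_one_le₀ h1⟩

-- if a finset of δ-separated points lies in X, any cover by δ/2-balls has at least that many balls
lemma card_le_of_cover {α : Type*} [PseudoMetricSpace α] {δ : ℝ} (P F : Finset α)
    (hsep : ∀ a ∈ P, ∀ b ∈ P, a ≠ b → δ < dist a b)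
    (hcov : ↑P ⊆ ⋃ x ∈ F, Metric.closedBall x (δ / 2)) : P.card ≤ F.card := by
  by_contra hlt
  push_neg at hlt
  classical
  set f : α → α := fun a => if h : ∃ c ∈ F, dist a c ≤ δ / 2 then h.choose else a with hf
  have hmaps : ∀ a ∈ P, f a ∈ F := by
    intro a ha
    have : ∃ c ∈ F, dist a c ≤ δ / 2 := by
      have := hcov ha
      simp only [Set.mem_iUnion, Metric.mem_closedBall] at this
      obtain ⟨c, hc, hd⟩ := this
      exact ⟨c, hc, hd⟩
    rw [hf]; simp only [this, dif_pos]
    exact this.choose_spec.1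
  have hdist : ∀ a ∈ P, dist a (f a) ≤ δ / 2 := by
    intro a ha
    have : ∃ c ∈ F, dist a c ≤ δ / 2 := by
      have := hcov ha
      simp only [Set.mem_iUnion, Metric.mem_closedBall] at this
      obtain ⟨c, hc, hd⟩ := this
      exact ⟨c, hc, hd⟩
    rw [hf]; simp only [this, dif_pos]
    exact this.choose_spec.2
  obtain ⟨a, ha, b, hb, hab, hfab⟩ :=
    Finset.exists_ne_map_eq_of_card_lt_of_maps_to hlt hmaps
  have : dist a b ≤ δ := by
    calc dist a b ≤ dist a (f a) + dist (f b) b := by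
          rw [hfab]; exact dist_triangle a (f b) b
      _ ≤ δ / 2 + δ / 2 := add_le_add (hdist a ha) (by rw [dist_comm]; exact hdist b hb)
      _ = δ := by ring
  exact absurd (hsep a ha b hb hab) (not_lt.2 this)

-- explicit grid cover of [0,1]² ⊇ K
lemma exists_cover {δ : ℝ} (hδ : 0 < δ) :
    ∃ F : Finset (ℝ × ℝ), F.card ≤ (⌊δ⁻¹⌋₊ + 1) ^ 2 ∧
      harmSet ×ˢ harmSet ⊆ ⋃ x ∈ F, Metric.closedBall x (δ / 2) := by
  classical
  set M := ⌊δ⁻¹⌋₊ + 1 with hM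
  set F : Finset (ℝ × ℝ) :=
    (Finset.range M ×ˢ Finset.range M).image
      (fun p : ℕ × ℕ => (((p.1 : ℝ) + 2⁻¹) * δ, ((p.2 : ℝ) + 2⁻¹) * δ)) with hF
  have key : ∀ a ∈ harmSet, ∃ i < M, dist a (((i : ℝ) + 2⁻¹) * δ) ≤ δ / 2 := by
    intro a ha
    obtain ⟨ha0, ha1⟩ := harmSet_subset ha
    refine ⟨⌊a / δ⌋₊, ?_, ?_⟩
    · have : a / δ ≤ δ⁻¹ := by
        rw [div_le_iff₀ hδ] at *
        calc a ≤ 1 := ha1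
          _ = δ⁻¹ * δ := (inv_mul_cancel₀ hδ.ne').symm
      have := Nat.floor_le_floor this
      omega
    · have hfl : (⌊a / δ⌋₊ : ℝ) ≤ a / δ := Nat.floor_le (by positivity)
      have hfu : a / δ < (⌊a / δ⌋₊ : ℝ) + 1 := Nat.lt_floor_add_one _
      have h1 : (⌊a / δ⌋₊ : ℝ) * δ ≤ a := by
        rw [← le_div_iff₀ hδ]; exact hfl
      have h2 : a < ((⌊a / δ⌋₊ : ℝ) + 1) * δ := by
        rw [← div_lt_iff₀ hδ]; exact hfu
      rw [Real.dist_eq, abs_le]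
      constructor <;> nlinarith
  refine ⟨F, ?_, ?_⟩
  · calc F.card ≤ (Finset.range M ×ˢ Finset.range M).card := Finset.card_image_le
      _ = M ^ 2 := by simp [sq]
  · rintro ⟨a, b⟩ ⟨ha, hb⟩
    obtain ⟨i, hi, hia⟩ := key a ha
    obtain ⟨j, hj, hjb⟩ := key b hb
    simp only [Set.mem_iUnion, Metric.mem_closedBall]
    refine ⟨(((i : ℝ) + 2⁻¹) * δ, ((j : ℝ) + 2⁻¹) * δ), ?_, ?_⟩
    · rw [hF]
      exact Finset.mem_image.2 ⟨(i, j), Finset.mem_product.2 ⟨Finset.mem_range.2 hi,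
        Finset.mem_range.2 hj⟩, rfl⟩
    · rw [Prod.dist_eq]
      exact max_le hia hjb

lemma covNum_le_sq {δ : ℝ} (hδ : 0 < δ) :
    covNum (harmSet ×ˢ harmSet) δ ≤ (⌊δ⁻¹⌋₊ + 1) ^ 2 := by
  obtain ⟨F, hc, hcov⟩ := exists_cover hδ
  exact le_trans (Nat.sInf_le ⟨F, rfl, hcov⟩) hc

-- gap estimate
lemma harm_gap {N a b : ℕ} (ha : 1 ≤ a) (hab : a < b) (hbN : b ≤ N + 1) :
    ((N + 1 : ℝ) * harm (N + 1) ^ 2)⁻¹ ≤ (harm a)⁻¹ - (harm b)⁻¹ := by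
  have hpa : 0 < harm a := harm_pos ha
  have hpb : 0 < harm b := harm_pos (by omega)
  have hpN : 0 < harm (N + 1) := harm_pos (by omega)
  have hmono_a : harm a ≤ harm (N + 1) := harm_strictMono.monotone (by omega)
  have hmono_b : harm b ≤ harm (N + 1) := harm_strictMono.monotone hbN
  have hgap : 1 / (N + 1 : ℝ) ≤ harm b - harm a := by
    have h1 : harm (a + 1) ≤ harm b := harm_strictMono.monotone (by omega)
    have h2 : harm (a + 1) = harm a + 1 / (a + 1) := harm_succ a
    have h3 : (1 : ℝ) / (N + 1) ≤ 1 / (a + 1) := by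
      apply one_div_le_one_div_of_le (by positivity)
      have hcast : (a : ℝ) ≤ N := by exact_mod_cast (by omega : a ≤ N)
      linarith
    linarith
  have heq : (harm a)⁻¹ - (harm b)⁻¹ = (harm b - harm a) / (harm a * harm b) := by
    field_simp
  rw [heq, mul_inv, ← div_eq_mul_inv]  -- goal: (N+1)⁻¹ / (harm (N+1)^2) ≤ ...
  have h0 : (0:ℝ) < 1 / (N + 1) := by positivity
  apply div_le_div₀ (by linarith) (by rw [inv_eq_one_div]; exact hgap) (by positivity)
  calc harm a * harm b ≤ harm (N + 1) * harm (N + 1) :=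
        mul_le_mul hmono_a hmono_b hpb.le hpN.le
    _ = harm (N + 1) ^ 2 := (sq _).symm

lemma sq_le_covNum {N : ℕ} (hN : 1 ≤ N) {δ : ℝ} (hδ : 0 < δ)
    (h : δ < ((N + 1 : ℝ) * harm (N + 1) ^ 2)⁻¹) :
    N ^ 2 ≤ covNum (harmSet ×ˢ harmSet) δ := by
  classical
  set Q : Finset ℝ := (Finset.Icc 1 N).image (fun n => (harm n)⁻¹) with hQ
  have hinj : Set.InjOn (fun n => (harm n)⁻¹) ↑(Finset.Icc 1 N) := by
    intro a _ b _ hab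
    exact harm_strictMono.injective (inv_injective hab)
  have hQcard : Q.card = N := by
    rw [hQ, Finset.card_image_of_injOn hinj, Nat.card_Icc]; omega
  have hQmem : ∀ x ∈ Q, x ∈ harmSet := by
    intro x hx
    rw [hQ] at hx
    obtain ⟨n, hn, rfl⟩ := Finset.mem_image.1 hx
    rw [Finset.mem_Icc] at hn
    exact Or.inr ⟨n, hn.1, rfl⟩
  have hQsep : ∀ x ∈ Q, ∀ y ∈ Q, x ≠ y → δ < dist x y := by
    intro x hx y hy hxy
    rw [hQ] at hx hy
    obtain ⟨a, haI, rfl⟩ := Finset.mem_image.1 hx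
    obtain ⟨b, hbI, rfl⟩ := Finset.mem_image.1 hy
    rw [Finset.mem_Icc] at haI hbI
    have hab : a ≠ b := fun hc => hxy (by rw [hc])
    rw [Real.dist_eq]
    rcases hab.lt_or_gt with hlt | hlt
    · have := harm_gap (N := N) haI.1 hlt (by omega)
      calc δ < ((N + 1 : ℝ) * harm (N + 1) ^ 2)⁻¹ := h
        _ ≤ (harm a)⁻¹ - (harm b)⁻¹ := this
        _ ≤ |(harm a)⁻¹ - (harm b)⁻¹| := le_abs_self _
    · have := harm_gap (N := N) hbI.1 hlt (by omega)
      calc δ < ((N + 1 : ℝ) * harm (N + 1) ^ 2)⁻¹ := h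
        _ ≤ (harm b)⁻¹ - (harm a)⁻¹ := this
        _ ≤ |(harm a)⁻¹ - (harm b)⁻¹| := by rw [abs_sub_comm]; exact le_abs_self _
  set P : Finset (ℝ × ℝ) := Q ×ˢ Q with hP
  have hPcard : P.card = N ^ 2 := by rw [hP, Finset.card_product, hQcard, sq]
  have hPsub : ↑P ⊆ harmSet ×ˢ harmSet := by
    rintro ⟨x, y⟩ hxy
    rw [hP, Finset.coe_product] at hxy
    exact ⟨hQmem _ hxy.1, hQmem _ hxy.2⟩
  have hPsep : ∀ p ∈ P, ∀ q ∈ P, p ≠ q → δ < dist p q := by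
    rintro ⟨x1, y1⟩ hp ⟨x2, y2⟩ hq hne
    rw [hP, Finset.mem_product] at hp hq
    rw [Prod.dist_eq]
    by_cases hx : x1 = x2
    · have hy : y1 ≠ y2 := fun h => hne (by rw [hx, h])
      exact lt_of_lt_of_le (hQsep _ hp.2 _ hq.2 hy) (le_max_right _ _)
    · exact lt_of_lt_of_le (hQsep _ hp.1 _ hq.1 hx) (le_max_left _ _)
  -- the covering set is nonempty
  obtain ⟨F0, _, hcov0⟩ := exists_cover hδ
  have hne : {n : ℕ | ∃ F : Finset (ℝ × ℝ), F.card = n ∧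
      harmSet ×ˢ harmSet ⊆ ⋃ x ∈ F, Metric.closedBall x (δ / 2)}.Nonempty :=
    ⟨F0.card, F0, rfl, hcov0⟩
  apply le_csInf hne
  rintro n ⟨F, rfl, hcov⟩
  rw [← hPcard]
  exact card_le_of_cover P F hPsep (fun p hp => hcov (hPsub hp))

lemma main_tendsto :
    Tendsto (fun δ : ℝ => log (covNum (harmSet ×ˢ harmSet) δ) / (-log δ))
      (nhdsWithin 0 (Set.Ioi 0)) (nhds 2) := by
  have hLtop : Tendsto (fun δ : ℝ => log δ⁻¹) (𝓝[>] (0:ℝ)) atTop :=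
    tendsto_log_atTop.comp tendsto_inv_nhdsGT_zero
  have hlogdiv : Tendsto (fun L : ℝ => log L / L) atTop (𝓝 0) := by
    have := Real.tendsto_pow_log_div_mul_add_atTop 1 0 1 one_ne_zero
    simpa using this
  -- lower comparison function
  have hl : Tendsto (fun δ : ℝ => 2 * (log δ⁻¹ - log 2 - 3 * log (log δ⁻¹)) / log δ⁻¹)
      (𝓝[>] (0:ℝ)) (𝓝 2) := by
    have outer : Tendsto (fun L : ℝ => 2 * (L - log 2 - 3 * log L) / L) atTop (𝓝 2) := by
      have h3 : Tendsto (fun L : ℝ => 2 - 2 * log 2 * L⁻¹ - 6 * (log L / L)) atTop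
          (𝓝 (2 - 2 * log 2 * 0 - 6 * 0)) :=
        (tendsto_const_nhds.sub ((tendsto_inv_atTop_zero).const_mul _)).sub
          (hlogdiv.const_mul _)
      norm_num at h3
      apply h3.congr'
      filter_upwards [eventually_gt_atTop (0:ℝ)] with L hL
      field_simp
      ring
    exact outer.comp hLtop
  have hu : Tendsto (fun δ : ℝ => 2 * (log δ⁻¹ + log 2) / log δ⁻¹) (𝓝[>] (0:ℝ)) (𝓝 2) := by
    have outer : Tendsto (fun L : ℝ => 2 * (L + log 2) / L) atTop (𝓝 2) := by
      have h3 : Tendsto (fun L : ℝ => 2 + 2 * log 2 * L⁻¹) atTop (𝓝 (2 + 2 * log 2 * 0)) :=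
        tendsto_const_nhds.add ((tendsto_inv_atTop_zero).const_mul _)
      norm_num at h3
      apply h3.congr'
      filter_upwards [eventually_gt_atTop (0:ℝ)] with L hL
      field_simp
    exact outer.comp hLtop
  have hsm0 : Tendsto (fun δ : ℝ => (log δ⁻¹) ^ 3 / δ⁻¹) (𝓝[>] (0:ℝ)) (𝓝 0) := by
    have := (Real.tendsto_pow_log_div_mul_add_atTop 1 0 3 one_ne_zero).comp
      tendsto_inv_nhdsGT_zero
    apply this.congr
    intro δ
    simp [Function.comp]
  refine tendsto_of_tendsto_of_tendsto_of_le_of_le' hl hu ?_ ?_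
  · -- lower bound eventually
    filter_upwards [self_mem_nhdsWithin, hLtop.eventually_ge_atTop 19,
      hsm0.eventually (gt_mem_nhds (by norm_num : (0:ℝ) < 1/2))] with δ hδpos hL19 hsm
    have hδpos : (0:ℝ) < δ := hδpos
    set x : ℝ := δ⁻¹ with hxdef
    set L : ℝ := log x with hLdef
    have hx : 0 < x := inv_pos.2 hδpos
    have hL : 0 < L := by linarith
    have hx1 : 1 < x := by
      by_contra hc
      push_neg at hc
      have := Real.log_nonpos hx.le hc
      linarith
    have hL3pos : 0 < L ^ 3 := by positivity
    have hL3 : L ^ 3 < x / 2 := by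
      rw [div_lt_iff₀ hx] at hsm
      linarith
    set N : ℕ := ⌊x / L ^ 3⌋₊ with hNdef
    have hxL2 : 2 ≤ x / L ^ 3 := by
      rw [le_div_iff₀ hL3pos]
      linarith
    have hdiv2 : x / (2 * L ^ 3) = (x / L ^ 3) / 2 := by ring
    have hNub : x / L ^ 3 < (N : ℝ) + 1 := Nat.lt_floor_add_one _
    have hNlb : x / (2 * L ^ 3) ≤ (N : ℝ) := by
      rw [hdiv2]; linarith
    have hNlb1 : (1 : ℝ) ≤ (N : ℝ) := by
      rw [hdiv2] at hNlb; linarith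
    have hN1 : 1 ≤ N := by exact_mod_cast hNlb1
    have hNle : (N : ℝ) ≤ x / L ^ 3 := Nat.floor_le (by positivity)
    -- separation condition
    have hL3ge1 : (1:ℝ) ≤ L ^ 3 := one_le_pow₀ (by linarith)
    have hHle : harm (N + 1) ≤ 1 + log ((N : ℝ) + 1) := by
      have := harm_le (N + 1)
      push_cast at this
      exact this
    have hN1x : (N : ℝ) + 1 ≤ 2 * x / L ^ 3 := by
      have h1 : (1:ℝ) ≤ (x / L ^ 3) / 2 := by linarith
      have : 2 * x / L ^ 3 = x / L ^ 3 + x / L ^ 3 := by ring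
      linarith
    have hlogN : log ((N : ℝ) + 1) ≤ log 2 + L := by
      calc log ((N : ℝ) + 1) ≤ log (2 * x / L ^ 3) :=
            Real.log_le_log (by positivity) hN1x
        _ ≤ log (2 * x) := by
            apply Real.log_le_log (by positivity)
            apply div_le_self (by positivity) hL3ge1
        _ = log 2 + L := Real.log_mul two_ne_zero hx.ne'
    have hlog2 : log 2 < 1 := by
      have := Real.log_two_lt_d9
      linarith
    have hH3L : harm (N + 1) ≤ 3 * L := by
      have : 1 + (log 2 + L) ≤ 3 * L := by linarith
      linarith
    have hHpos : 0 < harm (N + 1) := harm_pos (by omega)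
    have hbound : ((N : ℝ) + 1) * harm (N + 1) ^ 2 < x := by
      calc ((N : ℝ) + 1) * harm (N + 1) ^ 2 ≤ (2 * x / L ^ 3) * (3 * L) ^ 2 := by
            apply mul_le_mul hN1x (pow_le_pow_left₀ hHpos.le hH3L 2) (by positivity)
              (by positivity)
        _ = 18 * x / L := by
            field_simp
            ring
        _ < x := by
            rw [div_lt_iff₀ hL]
            nlinarith
    have hsep : δ < ((N + 1 : ℝ) * harm (N + 1) ^ 2)⁻¹ := by
      rw [show δ = x⁻¹ from (inv_inv δ).symm]
      exact inv_strictAnti₀ (by positivity) hbound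
    have hlow : N ^ 2 ≤ covNum (harmSet ×ˢ harmSet) δ := sq_le_covNum hN1 hδpos hsep
    have hcovpos : 0 < covNum (harmSet ×ˢ harmSet) δ :=
      lt_of_lt_of_le (by positivity) hlow
    -- the numerator inequality
    have hnum : 2 * (L - log 2 - 3 * log L) ≤ log (covNum (harmSet ×ˢ harmSet) δ) := by
      have e1 : 2 * (L - log 2 - 3 * log L) = 2 * log (x / (2 * L ^ 3)) := by
        rw [Real.log_div hx.ne' (by positivity), Real.log_mul two_ne_zero (by positivity),
          Real.log_pow]
        push_cast
        ring
      rw [e1]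
      calc 2 * log (x / (2 * L ^ 3)) ≤ 2 * log (N : ℝ) := by
            have hpos : 0 < x / (2 * L ^ 3) := by positivity
            have := Real.log_le_log hpos hNlb
            linarith
        _ = log ((N : ℝ) ^ 2) := by rw [Real.log_pow]; push_cast; ring
        _ ≤ log (covNum (harmSet ×ˢ harmSet) δ) := by
            apply Real.log_le_log (by positivity)
            exact_mod_cast hlow
    rw [← Real.log_inv]
    exact (div_le_div_iff_of_pos_right hL).2 hnum
  · -- upper bound eventually
    filter_upwards [self_mem_nhdsWithin, hLtop.eventually_ge_atTop 19] with δ hδpos hL19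
    have hδpos : (0:ℝ) < δ := hδpos
    set x : ℝ := δ⁻¹ with hxdef
    set L : ℝ := log x with hLdef
    have hx : 0 < x := inv_pos.2 hδpos
    have hL : 0 < L := by linarith
    have hx1 : 1 < x := by
      by_contra hc
      push_neg at hc
      have := Real.log_nonpos hx.le hc
      linarith
    have hfle : ((⌊x⌋₊ : ℝ) + 1) ≤ 2 * x := by
      have := Nat.floor_le hx.le
      linarith
    have hcovle : (covNum (harmSet ×ˢ harmSet) δ : ℝ) ≤ (2 * x) ^ 2 := by
      have h1 := covNum_le_sq hδpos
      have h2 : (covNum (harmSet ×ˢ harmSet) δ : ℝ) ≤ ((⌊x⌋₊ : ℝ) + 1) ^ 2 := by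
        exact_mod_cast h1
      calc (covNum (harmSet ×ˢ harmSet) δ : ℝ) ≤ ((⌊x⌋₊ : ℝ) + 1) ^ 2 := h2
        _ ≤ (2 * x) ^ 2 := pow_le_pow_left₀ (by positivity) hfle 2
    have hnum : log (covNum (harmSet ×ˢ harmSet) δ) ≤ 2 * (L + log 2) := by
      calc log (covNum (harmSet ×ˢ harmSet) δ) ≤ log ((2 * x) ^ 2) := by
            rcases Nat.eq_zero_or_pos (covNum (harmSet ×ˢ harmSet) δ) with h0 | hpos
            · rw [h0]
              simp only [Nat.cast_zero, Real.log_zero]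
              exact Real.log_nonneg (by nlinarith)
            · apply Real.log_le_log (by exact_mod_cast hpos) hcovle
        _ = 2 * (log 2 + L) := by
            rw [Real.log_pow, Real.log_mul two_ne_zero hx.ne']
            push_cast
            ring
        _ = 2 * (L + log 2) := by ring
    rw [← Real.log_inv]
    exact (div_le_div_iff_of_pos_right hL).2 hnum

/-- `K = A × A` is a compact countable subset of the plane with box-counting
dimension `2`. -/
theorem boxDim_harmonic_product_eq_two :
    IsCompact (harmSet ×ˢ harmSet) ∧ (harmSet ×ˢ harmSet).Countable ∧
    Tendsto (fun δ : ℝ => log (covNum (harmSet ×ˢ harmSet) δ) / (-log δ))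
      (nhdsWithin 0 (Set.Ioi 0)) (nhds 2) := by
  exact ⟨isCompact_harmSet.prod isCompact_harmSet,
    countable_harmSet.prod countable_harmSet, main_tendsto⟩
end
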